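/- arXiv:2603.11884 — 3 statements merged into one kernel-verified Lean document; each statement's English description precedes it below -/
import Mathlib

section
/- Let c1, c2, cf be positive reals with cf > 2·c1 and cf > 2·c2, and define the parallel-system reward matrix r by r(DN,DN) = −cf, r(DN,Rep) = −c2, r(Rep,DN) = −c1, r(Rep,Rep) = −(c1+c2). Then at any critical point (q1, q2) of the VDN least-squares loss Σ (q1 a₁ + q2 a₂ − r a₁ a₂)², both agents strictly prefer repair: q1(Rep) > q1(DN) and q2(Rep) > q2(DN). -/
/-!
Stationarity of the loss in the coordinate `q1 a` says that `q1 a` is the mean over `j` of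
`r a j - q2 j`. Subtracting the two stationarity equations of agent 1 gives
`2 (q1 Rep - q1 DN) = (r 1 0 + r 1 1) - (r 0 0 + r 0 1) = cf - 2 c1 > 0`; agent 2 is symmetric
after transposing `r`.
-/

/-- VDN least-squares loss in a two-agent, two-action matrix game.
Actions are indexed by `Fin 2` with `0 = DN` (do-nothing) and `1 = Rep` (repair). -/
noncomputable def vdnLoss (r : Fin 2 → Fin 2 → ℝ) (q1 q2 : Fin 2 → ℝ) : ℝ :=
  ∑ i, ∑ j, (q1 i + q2 j - r i j) ^ 2

open Function

theorem hasDerivAt_update_apply {ι : Type*} [DecidableEq ι] (x : ι → ℝ) (a i : ι) (t : ℝ) :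
    HasDerivAt (fun s => update x a s i) (if i = a then 1 else 0) t := by
  rcases eq_or_ne i a with rfl | hia
  · simpa using hasDerivAt_id' t
  · simpa [update_of_ne hia, hia] using hasDerivAt_const t (x i)

theorem hasDerivAt_vdnLoss_update_left (r : Fin 2 → Fin 2 → ℝ) (q1 q2 : Fin 2 → ℝ) (a : Fin 2)
    (t : ℝ) :
    HasDerivAt (fun s => vdnLoss r (update q1 a s) q2) (2 * ∑ j, (t + q2 j - r a j)) t := by
  have h : HasDerivAt (fun s => vdnLoss r (update q1 a s) q2)
      (∑ i, ∑ j, 2 * (update q1 a t i + q2 j - r i j) * if i = a then 1 else 0) t :=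
    HasDerivAt.fun_sum fun i _ => HasDerivAt.fun_sum fun j _ => by
      simpa using (((hasDerivAt_update_apply q1 a i t).add_const (q2 j)).sub_const (r i j)).fun_pow 2
  convert h using 1
  simp only [mul_ite, mul_one, mul_zero, Finset.sum_ite_irrel, Finset.sum_const_zero,
    Finset.sum_ite_eq', Finset.mem_univ, if_true, update_self, Finset.mul_sum]

theorem vdnLoss_comm (r : Fin 2 → Fin 2 → ℝ) (q1 q2 : Fin 2 → ℝ) :
    vdnLoss r q1 q2 = vdnLoss (fun j i => r i j) q2 q1 := by
  simp only [vdnLoss, add_comm (q1 _)]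
  exact Finset.sum_comm

theorem two_mul_eq_sum_of_deriv_vdnLoss_left_eq_zero {r : Fin 2 → Fin 2 → ℝ} {q1 q2 : Fin 2 → ℝ}
    {a : Fin 2} (h : deriv (fun t => vdnLoss r (update q1 a t) q2) (q1 a) = 0) :
    2 * q1 a = ∑ j, (r a j - q2 j) := by
  rw [(hasDerivAt_vdnLoss_update_left r q1 q2 a (q1 a)).deriv, Fin.sum_univ_two] at h
  rw [Fin.sum_univ_two]
  linarith

theorem two_mul_eq_sum_of_deriv_vdnLoss_right_eq_zero {r : Fin 2 → Fin 2 → ℝ} {q1 q2 : Fin 2 → ℝ}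
    {b : Fin 2} (h : deriv (fun t => vdnLoss r q1 (update q2 b t)) (q2 b) = 0) :
    2 * q2 b = ∑ i, (r i b - q1 i) := by
  simp only [vdnLoss_comm r q1] at h
  exact two_mul_eq_sum_of_deriv_vdnLoss_left_eq_zero h

theorem vdn_parallel_prefers_repair_general (c1 c2 cf : ℝ)
    (hcf1 : cf > 2 * c1) (hcf2 : cf > 2 * c2)
    (r : Fin 2 → Fin 2 → ℝ)
    (hr00 : r 0 0 = -cf) (hr01 : r 0 1 = -c2)
    (hr10 : r 1 0 = -c1) (hr11 : r 1 1 = -(c1 + c2))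
    (q1 q2 : Fin 2 → ℝ)
    (hcrit1 : ∀ a : Fin 2,
      deriv (fun t => vdnLoss r (Function.update q1 a t) q2) (q1 a) = 0)
    (hcrit2 : ∀ a : Fin 2,
      deriv (fun t => vdnLoss r q1 (Function.update q2 a t)) (q2 a) = 0) :
    q1 1 > q1 0 ∧ q2 1 > q2 0 := by
  have h10 := two_mul_eq_sum_of_deriv_vdnLoss_left_eq_zero (hcrit1 0)
  have h11 := two_mul_eq_sum_of_deriv_vdnLoss_left_eq_zero (hcrit1 1)
  have h20 := two_mul_eq_sum_of_deriv_vdnLoss_right_eq_zero (hcrit2 0)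
  have h21 := two_mul_eq_sum_of_deriv_vdnLoss_right_eq_zero (hcrit2 1)
  simp only [Fin.sum_univ_two, hr00, hr01, hr10, hr11] at h10 h11 h20 h21
  constructor <;> linarith

/-- In the parallel-system reward matrix, at any critical point of the VDN
least-squares loss both agents strictly prefer repair. -/
theorem vdn_parallel_prefers_repair (c1 c2 cf : ℝ)
    (hc1 : 0 < c1) (hc2 : 0 < c2) (hcf : 0 < cf)
    (hcf1 : cf > 2 * c1) (hcf2 : cf > 2 * c2)
    (r : Fin 2 → Fin 2 → ℝ)
    (hr00 : r 0 0 = -cf) (hr01 : r 0 1 = -c2)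
    (hr10 : r 1 0 = -c1) (hr11 : r 1 1 = -(c1 + c2))
    (q1 q2 : Fin 2 → ℝ)
    (hcrit1 : ∀ a : Fin 2,
      deriv (fun t => vdnLoss r (Function.update q1 a t) q2) (q1 a) = 0)
    (hcrit2 : ∀ a : Fin 2,
      deriv (fun t => vdnLoss r q1 (Function.update q2 a t)) (q2 a) = 0) :
    q1 1 > q1 0 ∧ q2 1 > q2 0 :=
  vdn_parallel_prefers_repair_general c1 c2 cf hcf1 hcf2 r hr00 hr01 hr10 hr11 q1 q2 hcrit1 hcrit2
end

section
/- Let c1, c2, cf be positive reals with cf > 2·max(c1,c2), and define the series-system reward matrix r by r(DN,DN) = −cf, r(DN,Rep) = −(cf+c2), r(Rep,DN) = −(cf+c1), r(Rep,Rep) = −(c1+c2). Then (Rep,Rep) is the unique maximizer of r, and at any critical point (q1,q2) of the VDN least-squares loss, the greedy joint action (argmax of q1, argmax of q2) equals (Rep,Rep); hence VDN recovers the optimal joint action for the series system. -/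
open Function

theorem vdnLoss_swap (r : Fin 2 → Fin 2 → ℝ) (q1 q2 : Fin 2 → ℝ) :
    vdnLoss r q1 q2 = vdnLoss (fun i j => r j i) q2 q1 := by
  unfold vdnLoss
  rw [Finset.sum_comm]
  simp only [add_comm (q1 _)]

theorem vdnLoss_critical_left {r : Fin 2 → Fin 2 → ℝ} {q1 q2 : Fin 2 → ℝ} {a : Fin 2}
    (h : deriv (fun t => vdnLoss r (update q1 a t) q2) (q1 a) = 0) :
    2 * q1 a + q2 0 + q2 1 = r a 0 + r a 1 := by
  rw [(hasDerivAt_vdnLoss_update_left r q1 q2 a (q1 a)).deriv, Fin.sum_univ_two] at h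
  linarith

theorem vdnLoss_critical_right {r : Fin 2 → Fin 2 → ℝ} {q1 q2 : Fin 2 → ℝ} {b : Fin 2}
    (h : deriv (fun t => vdnLoss r q1 (update q2 b t)) (q2 b) = 0) :
    q1 0 + q1 1 + 2 * q2 b = r 0 b + r 1 b := by
  simp only [vdnLoss_swap r q1] at h
  linarith [vdnLoss_critical_left h]

theorem vdnLoss_critical_left_sub {r : Fin 2 → Fin 2 → ℝ} {q1 q2 : Fin 2 → ℝ}
    (h : ∀ a, deriv (fun t => vdnLoss r (update q1 a t) q2) (q1 a) = 0) :
    2 * (q1 1 - q1 0) = r 1 0 + r 1 1 - (r 0 0 + r 0 1) := by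
  linarith [vdnLoss_critical_left (h 0), vdnLoss_critical_left (h 1)]

theorem vdnLoss_critical_right_sub {r : Fin 2 → Fin 2 → ℝ} {q1 q2 : Fin 2 → ℝ}
    (h : ∀ b, deriv (fun t => vdnLoss r q1 (update q2 b t)) (q2 b) = 0) :
    2 * (q2 1 - q2 0) = r 0 1 + r 1 1 - (r 0 0 + r 1 0) := by
  linarith [vdnLoss_critical_right (h 0), vdnLoss_critical_right (h 1)]

theorem series_reward_lt_rep_rep {c1 c2 cf : ℝ} (h1 : c1 < cf) (h2 : c2 < cf)
    (h12 : c1 + c2 < cf) {r : Fin 2 → Fin 2 → ℝ}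
    (hr00 : r 0 0 = -cf) (hr01 : r 0 1 = -(cf + c2))
    (hr10 : r 1 0 = -(cf + c1)) (hr11 : r 1 1 = -(c1 + c2)) :
    ∀ a b : Fin 2, (a, b) ≠ (1, 1) → r a b < r 1 1 := by
  simp only [Fin.forall_fin_two]
  refine ⟨⟨fun _ => ?_, fun _ => ?_⟩, fun _ => ?_, fun h => absurd rfl h⟩ <;> linarith

theorem vdn_series_optimal_general (c1 c2 cf : ℝ)
    (hcf : 0 < cf)
    (hcfmax : cf > 2 * max c1 c2)
    (r : Fin 2 → Fin 2 → ℝ)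
    (hr00 : r 0 0 = -cf) (hr01 : r 0 1 = -(cf + c2))
    (hr10 : r 1 0 = -(cf + c1)) (hr11 : r 1 1 = -(c1 + c2))
    (q1 q2 : Fin 2 → ℝ)
    (hcrit1 : ∀ a : Fin 2,
      deriv (fun t => vdnLoss r (Function.update q1 a t) q2) (q1 a) = 0)
    (hcrit2 : ∀ a : Fin 2,
      deriv (fun t => vdnLoss r q1 (Function.update q2 a t)) (q2 a) = 0) :
    (∀ a b : Fin 2, (a, b) ≠ ((1 : Fin 2), (1 : Fin 2)) → r a b < r 1 1) ∧
    q1 1 > q1 0 ∧ q2 1 > q2 0 := by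
  have h1 : 2 * c1 < cf := by linarith [le_max_left c1 c2]
  have h2 : 2 * c2 < cf := by linarith [le_max_right c1 c2]
  have gap1 := vdnLoss_critical_left_sub hcrit1
  have gap2 := vdnLoss_critical_right_sub hcrit2
  rw [hr00, hr01, hr10, hr11] at gap1 gap2
  exact ⟨series_reward_lt_rep_rep (by linarith) (by linarith) (by linarith) hr00 hr01 hr10 hr11,
    by linarith, by linarith⟩

/-- In the series system, `(Rep, Rep)` is the unique maximizer of the reward,
and at any critical point of the VDN loss the greedy joint action is
`(Rep, Rep)`: VDN recovers the optimal joint action. -/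
theorem vdn_series_optimal (c1 c2 cf : ℝ)
    (hc1 : 0 < c1) (hc2 : 0 < c2) (hcf : 0 < cf)
    (hcfmax : cf > 2 * max c1 c2)
    (r : Fin 2 → Fin 2 → ℝ)
    (hr00 : r 0 0 = -cf) (hr01 : r 0 1 = -(cf + c2))
    (hr10 : r 1 0 = -(cf + c1)) (hr11 : r 1 1 = -(c1 + c2))
    (q1 q2 : Fin 2 → ℝ)
    (hcrit1 : ∀ a : Fin 2,
      deriv (fun t => vdnLoss r (Function.update q1 a t) q2) (q1 a) = 0)
    (hcrit2 : ∀ a : Fin 2,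
      deriv (fun t => vdnLoss r q1 (Function.update q2 a t)) (q2 a) = 0) :
    (∀ a b : Fin 2, (a, b) ≠ ((1 : Fin 2), (1 : Fin 2)) → r a b < r 1 1) ∧
    q1 1 > q1 0 ∧ q2 1 > q2 0 :=
  vdn_series_optimal_general c1 c2 cf hcf hcfmax r hr00 hr01 hr10 hr11 q1 q2 hcrit1 hcrit2
end

section
/- Let A = {DN, Rep} and let f : ℝ → ℝ → ℝ be monotone nondecreasing in each argument, with Q_tot(a₁,a₂) = f (Q1 a₁) (Q2 a₂) for some Q1, Q2 : A → ℝ. If Q1(Rep) > Q1(DN), then Q_tot(Rep, Rep) ≥ Q_tot(DN, Rep). Consequently, no monotonic factorization can satisfy simultaneously Q_tot(DN,Rep) > Q_tot(Rep,Rep) and Q_tot(Rep,DN) > Q_tot(DN,DN). -/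
/-- For a two-action set (`0 = DN`, `1 = Rep`) and a mixing function `f`
monotone nondecreasing in each argument, with
`Q_tot a₁ a₂ = f (Q1 a₁) (Q2 a₂)`: if `Q1 Rep > Q1 DN` then
`Q_tot Rep Rep ≥ Q_tot DN Rep`; consequently no monotonic factorization can
simultaneously rank `(DN,Rep)` above `(Rep,Rep)` and `(Rep,DN)` above
`(DN,DN)`. -/
theorem qmix_monotone_ordering (Q1 Q2 : Fin 2 → ℝ) (f : ℝ → ℝ → ℝ)
    (hf1 : ∀ x x' y : ℝ, x ≤ x' → f x y ≤ f x' y)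
    (hf2 : ∀ x y y' : ℝ, y ≤ y' → f x y ≤ f x y')
    (Qtot : Fin 2 → Fin 2 → ℝ)
    (hQ : ∀ a₁ a₂ : Fin 2, Qtot a₁ a₂ = f (Q1 a₁) (Q2 a₂)) :
    (Q1 1 > Q1 0 → Qtot 1 1 ≥ Qtot 0 1) ∧
    ¬(Qtot 0 1 > Qtot 1 1 ∧ Qtot 1 0 > Qtot 0 0) := by
  constructor
  · intro h
    rw [hQ, hQ]
    exact hf1 _ _ _ h.le
  · rintro ⟨h1, h2⟩
    rcases le_total (Q1 0) (Q1 1) with h | h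
    · exact absurd ((hQ 0 1).trans_le ((hf1 _ _ _ h).trans (hQ 1 1).ge)) h1.not_ge
    · exact absurd ((hQ 1 0).trans_le ((hf1 _ _ _ h).trans (hQ 0 0).ge)) h2.not_ge
end
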